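/- arXiv:0907.0528 — 2 statements merged into one kernel-verified Lean document; each statement's English description precedes it below -/
import Mathlib

section
/- Let ψ be an (r+1)-symbol potential on A^ℕ (r ≥ 1) with transfer matrix 𝓜_r on A^r. Then the Birkhoff cross-ratio bound of 𝓜_r^r satisfies Φ(𝓜_r^r) ≥ exp(-2 Σ_{k=0}^r var_k ψ) > 0, and hence the contraction coefficient satisfies τ(𝓜_r^r) ≤ 1 - exp(-Σ_{k=0}^∞ var_k ψ) provided Σ_k var_k ψ < ∞. -/
open MeasureTheory Filter Topology
open scoped ENNReal

attribute [local instance] Classical.propDecidable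

noncomputable section

/-- The shift map on one-sided sequences. -/
def shiftSeq {A : Type*} : (ℕ → A) → (ℕ → A) := fun a n => a (n + 1)

/-- The cylinder set of a finite word. -/
def cyl {A : Type*} {n : ℕ} (w : Fin n → A) : Set (ℕ → A) := {a | ∀ i : Fin n, a (i : ℕ) = w i}

/-- Birkhoff sum `S_n ψ`. -/
def birk {A : Type*} (ψ : (ℕ → A) → ℝ) (n : ℕ) (a : ℕ → A) : ℝ :=
  ∑ k ∈ Finset.range n, ψ (shiftSeq^[k] a)

/-- `ψ` is an `(r+1)`-symbol potential: it depends only on coordinates `0,…,r`. -/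
def IsLocConst {A : Type*} (r : ℕ) (ψ : (ℕ → A) → ℝ) : Prop :=
  ∀ a b : ℕ → A, (∀ i ≤ r, a i = b i) → ψ a = ψ b

/-- `n`-th variation of a potential. -/
def varPot {A : Type*} (n : ℕ) (ψ : (ℕ → A) → ℝ) : ℝ :=
  sSup {x | ∃ a b : ℕ → A, (∀ i ≤ n, a i = b i) ∧ x = |ψ a - ψ b|}

/-- Gibbs inequality on the full shift, with pressure `P` and constant `C`. -/
def IsGibbsFull {A : Type*} [MeasurableSpace A] (μ : Measure (ℕ → A))
    (ψ : (ℕ → A) → ℝ) (P C : ℝ) : Prop :=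
  ∀ (n : ℕ) (a : ℕ → A),
    Real.exp (birk ψ (n + 1) a - (n + 1) * P) / C
        ≤ (μ (cyl (fun i : Fin (n + 1) => a i))).toReal ∧
    (μ (cyl (fun i : Fin (n + 1) => a i))).toReal
        ≤ C * Real.exp (birk ψ (n + 1) a - (n + 1) * P)

/-- Hilbert's projective metric on positive vectors. -/
def hilbertDist {E : Type*} [Fintype E] (x y : E → ℝ) : ℝ :=
  ⨆ e : E, ⨆ f : E, Real.log ((x e * y f) / (x f * y e))

/-- Birkhoff's cross-ratio bound `Φ(M)`: the minimum of the cross ratios when `M > 0`,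
and `0` otherwise. -/
def PhiM {E E' : Type*} [Fintype E] [Fintype E'] (M : Matrix E E' ℝ) : ℝ :=
  if ∀ e e', 0 < M e e' then
    ⨅ e : E, ⨅ f : E, ⨅ e' : E', ⨅ f' : E', M e e' * M f f' / (M e f' * M f e')
  else 0

/-- Birkhoff's contraction coefficient `τ(M)`. -/
def tauM {E E' : Type*} [Fintype E] [Fintype E'] (M : Matrix E E' ℝ) : ℝ :=
  (1 - Real.sqrt (PhiM M)) / (1 + Real.sqrt (PhiM M))

/-- The normalized action of `M` on the simplex. -/
def FM {E E' : Type*} [Fintype E] [Fintype E'] (M : Matrix E E' ℝ) (x : E' → ℝ) : E → ℝ :=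
  fun e => M.mulVec x e / ∑ f, M.mulVec x f

/-- Membership in the open probability simplex. -/
def inSimplex {E : Type*} [Fintype E] (x : E → ℝ) : Prop :=
  (∀ e, 0 < x e) ∧ ∑ e, x e = 1

/-- The infinite sequence beginning with the word `v` followed by the last letter of `w`. -/
def wordSeq {A : Type*} {r : ℕ} (hr : 0 < r) (v w : Fin r → A) : ℕ → A :=
  fun n => if h : n < r then v ⟨n, h⟩ else w ⟨r - 1, Nat.sub_lt hr Nat.one_pos⟩

/-- The transfer matrix `𝓜_ψ` of an `(r+1)`-symbol potential:
`𝓜_ψ(v,w) = exp(ψ(v·w_{r-1}))` if `v₁^{r-1} = w₀^{r-2}`, else `0`. -/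
def transferMat {A : Type*} {r : ℕ} (hr : 0 < r) (ψ : (ℕ → A) → ℝ) :
    Matrix (Fin r → A) (Fin r → A) ℝ :=
  fun v w =>
    if ∀ (i : ℕ) (hi : i + 1 < r), v ⟨i + 1, hi⟩ = w ⟨i, Nat.lt_of_succ_lt hi⟩ then
      Real.exp (ψ (wordSeq hr v w))
    else 0
/-!
A nonzero entry `𝓜^n(v, w)` forces `w_i = v_{n+i}`. Hence for `n ≤ r` the only path of length `n`
in the transfer graph from the first to the `n`-th length-`r` window of a sequence `x` runs through
the intermediate windows, and `𝓜^n(x_{[0,r)}, x_{[n,n+r)}) = exp (S_n ψ x)`; in particular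
`𝓜_r^r(v, w) = exp (S_r ψ (vw)) > 0`. Replacing `w` by `w'` keeps the first `r` symbols of `vw`,
and the `k`-th summand of `S_r ψ` sees `r - k` of them, so `S_r ψ (vw)` moves by at most
`∑_{j<r} var_j ψ`. Every cross ratio of `𝓜_r^r` is therefore at least `exp (-2 ∑_{j<r} var_j ψ)`,
and `τ ≤ 1 - √Φ` gives the bound on the contraction coefficient.
-/

open Finset

def seqWindow {A : Type*} (r k : ℕ) (x : ℕ → A) : Fin r → A := fun i => x (k + i)

lemma iterate_shiftSeq_apply {A : Type*} (k : ℕ) (a : ℕ → A) (m : ℕ) :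
    shiftSeq^[k] a m = a (m + k) := by
  induction k generalizing a with
  | zero => rfl
  | succ k ih => rw [Function.iterate_succ_apply, ih]; rfl

lemma exists_seqWindow_eq {A : Type*} {r : ℕ} (hr : 0 < r) (v w : Fin r → A) :
    ∃ x : ℕ → A, seqWindow r 0 x = v ∧ seqWindow r r x = w :=
  ⟨fun m => if h : m < r then v ⟨m, h⟩ else w ⟨min (m - r) (r - 1), by omega⟩,
    by ext i; simp [seqWindow],
    by ext i; simp [seqWindow, min_eq_left (Nat.le_sub_one_of_lt i.isLt)]⟩

lemma varPot_nonneg {A : Type*} (n : ℕ) (ψ : (ℕ → A) → ℝ) : 0 ≤ varPot n ψ :=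
  Real.sSup_nonneg fun _ ⟨_, _, _, hx⟩ => hx ▸ abs_nonneg _

section Variation

variable {A : Type*} {r : ℕ} {ψ : (ℕ → A) → ℝ}

lemma IsLocConst.finite_range [Finite A] (hψ : IsLocConst r ψ) : (Set.range ψ).Finite := by
  set ρ : (ℕ → A) → Fin (r + 1) → A := fun a i => a i
  have hfac : Function.FactorsThrough ψ ρ := fun a b h =>
    hψ a b fun i hi => congrFun h ⟨i, Nat.lt_succ_of_le hi⟩
  have hψρ : Function.extend ρ ψ 0 ∘ ρ = ψ := funext (hfac.extend_apply 0)
  rw [← hψρ]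
  exact (Set.finite_range _).subset (Set.range_comp_subset_range _ _)

lemma IsLocConst.abs_sub_le_varPot [Finite A] (hψ : IsLocConst r ψ) {n : ℕ} {a b : ℕ → A}
    (hab : ∀ i ≤ n, a i = b i) : |ψ a - ψ b| ≤ varPot n ψ := by
  refine le_csSup ?_ ⟨a, b, hab, rfl⟩
  have hfin := hψ.finite_range
  refine ((hfin.prod hfin).image fun p => |p.1 - p.2|).bddAbove.mono ?_
  rintro _ ⟨a, b, -, rfl⟩
  exact ⟨(ψ a, ψ b), ⟨⟨a, rfl⟩, b, rfl⟩, rfl⟩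

lemma IsLocConst.abs_birk_sub_le [Finite A] (hψ : IsLocConst r ψ) {n : ℕ} {a b : ℕ → A}
    (hab : ∀ m < n, a m = b m) :
    |birk ψ n a - birk ψ n b| ≤ ∑ j ∈ range n, varPot j ψ := by
  rw [birk, birk, ← sum_sub_distrib, ← sum_range_reflect (fun j => varPot j ψ)]
  refine (abs_sum_le_sum_abs _ _).trans (sum_le_sum fun k hk => ?_)
  have hk := mem_range.mp hk
  refine hψ.abs_sub_le_varPot fun i hi => ?_
  rw [iterate_shiftSeq_apply, iterate_shiftSeq_apply]
  exact hab _ (by omega)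

end Variation

section CrossRatio

variable {E E' : Type*} [Fintype E] [Fintype E'] [Nonempty E] [Nonempty E'] {M : Matrix E E' ℝ}

lemma le_PhiM {c : ℝ} (hM : ∀ e e', 0 < M e e')
    (hc : ∀ e f e' f', c ≤ M e e' * M f f' / (M e f' * M f e')) : c ≤ PhiM M := by
  rw [PhiM, if_pos hM]
  exact le_ciInf fun e => le_ciInf fun f => le_ciInf fun e' => le_ciInf fun f' => hc e f e' f'

lemma PhiM_le_one (M : Matrix E E' ℝ) : PhiM M ≤ 1 := by
  rw [PhiM]
  split_ifs
  · obtain ⟨e⟩ := ‹Nonempty E›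
    obtain ⟨e'⟩ := ‹Nonempty E'›
    refine (ciInf_le (Finite.bddBelow_range _) e).trans ?_
    refine (ciInf_le (Finite.bddBelow_range _) e).trans ?_
    refine (ciInf_le (Finite.bddBelow_range _) e').trans ?_
    exact (ciInf_le (Finite.bddBelow_range _) e').trans (div_self_le_one _)
  · exact zero_le_one

lemma tauM_le_one_sub_exp {s : ℝ} (h : Real.exp (-2 * s) ≤ PhiM M) :
    tauM M ≤ 1 - Real.exp (-s) := by
  have hsqrt : Real.exp (-s) ≤ √(PhiM M) := by
    rw [Real.le_sqrt' (Real.exp_pos _), ← Real.exp_nat_mul]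
    convert h using 2
    ring
  have hle1 : √(PhiM M) ≤ 1 := Real.sqrt_le_one.mpr (PhiM_le_one M)
  calc tauM M ≤ 1 - √(PhiM M) :=
        div_le_self (by linarith) (by linarith [Real.sqrt_nonneg (PhiM M)])
    _ ≤ 1 - Real.exp (-s) := by linarith

end CrossRatio

section TransferMatrix

variable {A : Type*} {r : ℕ} (hr : 0 < r) {ψ : (ℕ → A) → ℝ}

lemma transferMat_shift_of_ne_zero {v w : Fin r → A} (h : transferMat hr ψ v w ≠ 0) (i : ℕ)
    (hi : i + 1 < r) : v ⟨i + 1, hi⟩ = w ⟨i, by omega⟩ := by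
  unfold transferMat at h
  split_ifs at h with hvw
  · exact hvw i hi
  · exact absurd rfl h

lemma transferMat_seqWindow (hψ : IsLocConst r ψ) (k : ℕ) (x : ℕ → A) :
    transferMat hr ψ (seqWindow r k x) (seqWindow r (k + 1) x) =
      Real.exp (ψ (shiftSeq^[k] x)) := by
  rw [transferMat, if_pos fun i hi => by simp only [seqWindow]; congr 1; omega]
  congr 1
  refine hψ _ _ fun i hi => ?_
  rw [iterate_shiftSeq_apply, wordSeq]
  split_ifs
  · simp only [seqWindow]; congr 1; omega
  · simp only [seqWindow]; congr 1; omega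

variable [Fintype A] {hr}

lemma transferMat_pow_apply_eq_of_ne_zero {n : ℕ} {v w : Fin r → A}
    (h : (transferMat hr ψ ^ n) v w ≠ 0) (i : ℕ) (hi : n + i < r) :
    w ⟨i, by omega⟩ = v ⟨n + i, hi⟩ := by
  induction n generalizing w i with
  | zero =>
    obtain rfl : v = w := by_contra fun hvw => h (Matrix.one_apply_ne hvw)
    simp
  | succ n ih =>
    rw [pow_succ, Matrix.mul_apply] at h
    obtain ⟨u, -, hu⟩ := exists_ne_zero_of_sum_ne_zero h
    obtain ⟨hvu, huw⟩ := mul_ne_zero_iff.mp hu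
    rw [← transferMat_shift_of_ne_zero hr huw i (by omega), ih hvu (i + 1) (by omega)]
    congr 2; omega

lemma transferMat_pow_seqWindow (hψ : IsLocConst r ψ) {n : ℕ} (hn : n ≤ r) (x : ℕ → A) :
    (transferMat hr ψ ^ n) (seqWindow r 0 x) (seqWindow r n x) = Real.exp (birk ψ n x) := by
  induction n with
  | zero => simp [birk]
  | succ n ih =>
    rw [pow_succ, Matrix.mul_apply, sum_eq_single (seqWindow r n x), ih (by omega),
      transferMat_seqWindow hr hψ, ← Real.exp_add, birk, birk, sum_range_succ]
    · intro u _ hu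
      by_contra h
      obtain ⟨hvu, huw⟩ := mul_ne_zero_iff.mp h
      refine hu (funext fun i => ?_)
      rcases i with ⟨_ | i, hi⟩
      · rw [transferMat_pow_apply_eq_of_ne_zero hvu 0 (by omega)]
        simp only [seqWindow]; congr 1; omega
      · rw [transferMat_shift_of_ne_zero hr huw i hi]
        simp only [seqWindow]; congr 1; omega
    · simp

lemma exp_neg_two_mul_le_PhiM_transferMat_pow [Nonempty A] (hψ : IsLocConst r ψ) :
    Real.exp (-2 * ∑ j ∈ range r, varPot j ψ) ≤ PhiM (transferMat hr ψ ^ r) := by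
  choose x hx0 hxr using exists_seqWindow_eq (A := A) hr
  have hpow (v w : Fin r → A) : (transferMat hr ψ ^ r) v w = Real.exp (birk ψ r (x v w)) := by
    rw [← transferMat_pow_seqWindow hψ le_rfl, hx0, hxr]
  have hprefix (v w w' : Fin r → A) (m : ℕ) (hm : m < r) : x v w m = x v w' m := by
    simpa [seqWindow] using congrFun ((hx0 v w).trans (hx0 v w').symm) ⟨m, hm⟩
  refine le_PhiM (fun v w => hpow v w ▸ Real.exp_pos _) fun e f e' f' => ?_
  rw [hpow, hpow, hpow, hpow, ← Real.exp_add, ← Real.exp_add, ← Real.exp_sub, Real.exp_le_exp]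
  have h₁ := abs_le.mp (hψ.abs_birk_sub_le (hprefix e e' f'))
  have h₂ := abs_le.mp (hψ.abs_birk_sub_le (hprefix f f' e'))
  linarith

end TransferMatrix

theorem transferMat_contraction_bounds_general {A : Type*} [Fintype A] (hA : 2 ≤ Fintype.card A)
    {r : ℕ} (hr : 1 ≤ r) (ψ : (ℕ → A) → ℝ) (hψ : IsLocConst r ψ)
    (hsum : Summable (fun k => varPot k ψ)) :
    0 < PhiM ((transferMat hr ψ) ^ r) ∧
    Real.exp (-2 * ∑ k ∈ Finset.range (r + 1), varPot k ψ) ≤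
      PhiM ((transferMat hr ψ) ^ r) ∧
    tauM ((transferMat hr ψ) ^ r) ≤ 1 - Real.exp (-(∑' k : ℕ, varPot k ψ)) := by
  have : Nonempty A := Fintype.card_pos_iff.mp (by omega)
  have hΦ : Real.exp (-2 * ∑ k ∈ Finset.range (r + 1), varPot k ψ) ≤
      PhiM ((transferMat hr ψ) ^ r) := by
    refine le_trans ?_ (exp_neg_two_mul_le_PhiM_transferMat_pow hψ)
    rw [sum_range_succ]
    exact Real.exp_le_exp.mpr (by linarith [varPot_nonneg r ψ])
  refine ⟨(Real.exp_pos _).trans_le hΦ, hΦ, (tauM_le_one_sub_exp hΦ).trans ?_⟩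
  gcongr
  exact hsum.sum_le_tsum _ fun k _ => varPot_nonneg k ψ

/-- lower bound on the Birkhoff cross-ratio of `𝓜_r^r` and upper bound on
the contraction coefficient in terms of the variations of `ψ`. -/
theorem transferMat_contraction_bounds {A : Type*} [Fintype A] (hA : 2 ≤ Fintype.card A)
    {r : ℕ} (hr : 1 ≤ r) (ψ : (ℕ → A) → ℝ) (hψ : IsLocConst r ψ)
    (hsum : Summable (fun k => varPot k ψ)) (hvar : ∀ k, 0 ≤ varPot k ψ) :
    0 < PhiM ((transferMat hr ψ) ^ r) ∧
    Real.exp (-2 * ∑ k ∈ Finset.range (r + 1), varPot k ψ) ≤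
      PhiM ((transferMat hr ψ) ^ r) ∧
    tauM ((transferMat hr ψ) ^ r) ≤ 1 - Real.exp (-(∑' k : ℕ, varPot k ψ)) :=
  transferMat_contraction_bounds_general hA hr ψ hψ hsum
end
end

section
/- With the notation of the amalgamation of an r-step Markov measure: ν_r[b_0^n] admits the matrix expression ν_r[b_0^n] = L̄_{r,b_0^{r-1}}† (∏_{j=0}^{n-r} 𝓜_{r,b_j^{j+r}} / ρ_r^{n-r+1}) R̄_{r,b_{n-r+1}^n}, where 𝓜_{r,w} is the restriction of the transfer matrix 𝓜_r to fibers E_{w_0^{r-1}} × E_{w_1^r}, E_w := {v ∈ A^r : πv = w}, and L̄_{r,w}, R̄_{r,w} are the restrictions of the left and right Perron eigenvectors to E_w. -/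
open MeasureTheory Filter Topology
open scoped ENNReal

attribute [local instance] Classical.propDecidable

noncomputable section

/-!
The cylinder `[b₀ⁿ]` of the factor pulls back to the disjoint union of the cylinders `[a₀ⁿ]` with
`π a = b`, and each of these carries the Markov weight
`L(a₀^{r-1}) ∏ⱼ 𝓜(a_j^{j+r-1}, a_{j+1}^{j+r}) R(a_{n-r+1}^n) / ρ^{n-r+1}`.
On the other side, expanding the product of fibre-restricted matrices gives a sum over paths of
`r`-blocks lying in the fibres of `b`. Since `𝓜(v, w)` vanishes unless `w` is `v` shifted by one
letter, only the paths of sliding windows of a word survive, and sliding windows identify these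
paths with the words `a` over `b`.
-/

section Windows

variable {A : Type*}

def ShiftCompatible {r : ℕ} (v w : Fin r → A) : Prop :=
  ∀ (i : ℕ) (hi : i + 1 < r), v ⟨i + 1, hi⟩ = w ⟨i, Nat.lt_of_succ_lt hi⟩

variable {m r N : ℕ}

def windows (h : m + r = N) (c : Fin N → A) (j : Fin (m + 1)) : Fin r → A :=
  fun i => c ⟨j + i, by omega⟩

lemma windows_restrict (h : m + r = N) (a : ℕ → A) (j : Fin (m + 1)) :
    windows h (fun i : Fin N => a i) j = fun i : Fin r => a (j + i) :=
  rfl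

lemma forall_windows_iff (hr : 0 < r) (h : m + r = N) {Q : Fin N → Prop} :
    (∀ (j : Fin (m + 1)) (i : Fin r), Q ⟨j + i, by omega⟩) ↔ ∀ k, Q k := by
  refine ⟨fun hQ k => ?_, fun hQ j i => hQ _⟩
  have hk := hQ ⟨min (k : ℕ) m, by omega⟩ ⟨k - min (k : ℕ) m, by omega⟩
  convert hk using 2
  dsimp only
  omega

lemma windows_injective (hr : 0 < r) (h : m + r = N) :
    Function.Injective (windows (A := A) h) := fun _ _ hcc' =>
  funext <| (forall_windows_iff hr h).1 fun j i => congrFun (congrFun hcc' j) i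

lemma apply_eq_apply_of_shiftCompatible {f : Fin (m + 1) → Fin r → A}
    (hf : ∀ j : Fin m, ShiftCompatible (f j.castSucc) (f j.succ))
    {j j' : Fin (m + 1)} {i i' : Fin r} (h : (j : ℕ) + i = j' + i') : f j i = f j' i' := by
  wlog hle : (j : ℕ) ≤ j' generalizing j j' i i'
  · exact (this h.symm (by omega)).symm
  obtain ⟨d, hd⟩ := Nat.exists_eq_add_of_le hle
  induction d generalizing j i with
  | zero => congr <;> ext <;> omega
  | succ d ih =>
    have hstep := hf ⟨j, by omega⟩ (i - 1) (by omega)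
    calc f j i = f ⟨j + 1, by omega⟩ ⟨i - 1, by omega⟩ := by
          convert hstep using 2
          all_goals simp only [Fin.ext_iff, Fin.val_castSucc, Fin.val_succ]
          omega
      _ = f j' i' := ih (by simp only; omega) (by simp only; omega)
          (by simp only; omega)

lemma exists_windows_eq (hr : 0 < r) (h : m + r = N) {f : Fin (m + 1) → Fin r → A}
    (hf : ∀ j : Fin m, ShiftCompatible (f j.castSucc) (f j.succ)) :
    ∃ c : Fin N → A, windows h c = f :=
  ⟨fun k => f ⟨min (k : ℕ) m, by omega⟩ ⟨k - min (k : ℕ) m, by omega⟩,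
    funext₂ fun _ _ => apply_eq_apply_of_shiftCompatible hf (by simp only; omega)⟩

lemma sum_paths_eq_sum_windows {M : Type*} [AddCommMonoid M] [Fintype A] (hr : 0 < r)
    (h : m + r = N) (F : (Fin (m + 1) → Fin r → A) → M)
    (hF : ∀ f, F f ≠ 0 → ∀ j : Fin m, ShiftCompatible (f j.castSucc) (f j.succ)) :
    ∑ f, F f = ∑ c, F (windows h c) := by
  refine (Fintype.sum_of_injective _ (windows_injective hr h) _ _ (fun f hf => ?_)
    fun _ => rfl).symm
  by_contra hF0
  exact hf (exists_windows_eq hr h (hF f hF0))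

end Windows

section TransferMatrix

variable {A : Type*}

lemma transferMat_nonneg {r : ℕ} (hr : 0 < r) (ψ : (ℕ → A) → ℝ) (v w : Fin r → A) :
    0 ≤ transferMat hr ψ v w := by
  unfold transferMat
  split_ifs
  exacts [(Real.exp_pos _).le, le_rfl]

lemma shiftCompatible_of_prod_transferMat_ne_zero {r m : ℕ} (hr : 0 < r) (ψ : (ℕ → A) → ℝ)
    {f : Fin (m + 1) → Fin r → A}
    (hf : ∏ j : Fin m, transferMat hr ψ (f j.castSucc) (f j.succ) ≠ 0) (j : Fin m) :
    ShiftCompatible (f j.castSucc) (f j.succ) := by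
  by_contra hj
  exact Finset.prod_ne_zero_iff.1 hf j (Finset.mem_univ j) (if_neg hj)

end TransferMatrix

section PathExpansion

open Matrix

variable {V S : Type*} [Fintype V] [DecidableEq V] [CommSemiring S]

lemma dotProduct_listProd_mulVec (x y : V → S) (M : ℕ → Matrix V V S) (m : ℕ) :
    x ⬝ᵥ (((List.range m).map M).prod *ᵥ y) =
      ∑ f : Fin (m + 1) → V,
        x (f 0) * (∏ j : Fin m, M j (f j.castSucc) (f j.succ)) * y (f (Fin.last m)) := by
  induction m generalizing x M with
  | zero =>
    simp only [List.range_zero, List.map_nil, List.prod_nil, one_mulVec, Finset.univ_eq_empty,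
      Finset.prod_empty, mul_one, dotProduct]
    exact ((Equiv.funUnique (Fin 1) V).sum_comp (fun v => x v * y v)).symm
  | succ m ih =>
    rw [List.range_succ_eq_map, List.map_cons, List.prod_cons, List.map_map,
      ← Matrix.mulVec_mulVec, Matrix.dotProduct_mulVec, ih,
      ← (Fin.consEquiv fun _ => V).sum_comp fun g => x (g 0) *
        (∏ j : Fin (m + 1), M j (g j.castSucc) (g j.succ)) * y (g (Fin.last (m + 1))),
      Fintype.sum_prod_type, Finset.sum_comm]
    refine Finset.sum_congr rfl fun f _ => ?_
    simp only [Fin.consEquiv_apply, Fin.prod_univ_succ, Fin.cons_zero, Fin.cons_succ,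
      Fin.castSucc_zero, ← Fin.succ_castSucc, ← Fin.succ_last, Fin.val_succ,
      Function.comp_apply, Fin.val_zero, Matrix.vecMul, dotProduct, Finset.sum_mul]
    refine Finset.sum_congr rfl fun u _ => ?_
    ring

lemma dotProduct_listProd_restrict_mulVec (P : ℕ → V → Prop) [∀ j, DecidablePred (P j)]
    (x y : V → S) (M : ℕ → Matrix V V S) (m : ℕ) :
    (fun v => if P 0 v then x v else 0) ⬝ᵥ
        (((List.range m).map fun j =>
            Matrix.of fun v v' => if P j v ∧ P (j + 1) v' then M j v v' else 0).prod *ᵥ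
          fun v => if P m v then y v else 0) =
      ∑ f : Fin (m + 1) → V, if ∀ j : Fin (m + 1), P j (f j) then
        x (f 0) * (∏ j : Fin m, M j (f j.castSucc) (f j.succ)) * y (f (Fin.last m)) else 0 := by
  rw [dotProduct_listProd_mulVec]
  refine Finset.sum_congr rfl fun f _ => ?_
  simp only [Matrix.of_apply, Fintype.prod_ite_zero, ite_zero_mul_ite_zero]
  congr 1
  refine propext ⟨fun ⟨⟨_, hmid⟩, hm⟩ j => ?_,
    fun h => ⟨⟨h 0, fun j => ⟨h j.castSucc, h j.succ⟩⟩, h (Fin.last m)⟩⟩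
  induction j using Fin.lastCases with
  | last => exact hm
  | cast j => exact (hmid j).1

end PathExpansion

section Cylinders

variable {A B : Type*} [MeasurableSpace A]

lemma measurableSet_cyl [MeasurableSingletonClass A] {n : ℕ} (w : Fin n → A) :
    MeasurableSet (cyl w) := by
  have : cyl w = ⋂ i : Fin n, (fun a : ℕ → A => a i) ⁻¹' {w i} := by
    ext; simp [cyl]
  rw [this]
  exact .iInter fun i => measurable_pi_apply _ (measurableSet_singleton _)

lemma map_cyl_eq_sum [Fintype A] [MeasurableSingletonClass A] [MeasurableSpace B]
    [MeasurableSingletonClass B] (μ : Measure (ℕ → A)) (π : A → B) {n : ℕ} (w : Fin n → B) :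
    μ.map (fun a k => π (a k)) (cyl w) = ∑ c with ∀ i, π (c i) = w i, μ (cyl c) := by
  have hπ : Measurable fun (a : ℕ → A) k => π (a k) :=
    measurable_pi_lambda _ fun k => (measurable_of_finite π).comp (measurable_pi_apply k)
  have hpre : (fun (a : ℕ → A) k => π (a k)) ⁻¹' cyl w =
      ⋃ c ∈ Finset.univ.filter fun c : Fin n → A => ∀ i, π (c i) = w i, cyl c := by
    ext a
    simp only [cyl, Set.mem_preimage, Set.mem_ofPred_eq, Set.mem_iUnion, Finset.mem_filter,
      Finset.mem_univ, true_and]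
    exact ⟨fun h => ⟨fun i => a i, h, fun _ => rfl⟩, fun ⟨c, hc, ha⟩ i => ha i ▸ hc i⟩
  have hdisj : ((Finset.univ.filter fun c : Fin n → A => ∀ i, π (c i) = w i) :
      Set (Fin n → A)).PairwiseDisjoint cyl :=
    fun c _ c' _ hcc' => Set.disjoint_left.2 fun a ha ha' =>
      hcc' (funext fun i => (ha i).symm.trans (ha' i))
  rw [Measure.map_apply hπ (measurableSet_cyl w), hpre,
    measure_biUnion_finset hdisj fun c _ => measurableSet_cyl c]

end Cylinders

theorem pushforward_matrix_expression_general {A B : Type*} [Fintype A] [DecidableEq A]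
    [MeasurableSpace A] [MeasurableSingletonClass A] [MeasurableSpace B]
    [MeasurableSingletonClass B]
    (π : A → B)
    {r : ℕ} (hr : 1 ≤ r) (ψr : (ℕ → A) → ℝ)
    (ρ : ℝ) (hρ : 0 < ρ) (R L : (Fin r → A) → ℝ)
    (hRpos : ∀ v, 0 < R v) (hLpos : ∀ v, 0 < L v)
    (μr : Measure (ℕ → A))
    (hParry : ∀ (n : ℕ), r ≤ n → ∀ a : ℕ → A,
      μr (cyl (fun i : Fin (n + 1) => a i)) =
        ENNReal.ofReal
          (L (fun i : Fin r => a i) *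
            ((∏ j ∈ Finset.range (n - r + 1),
                transferMat hr ψr (fun i : Fin r => a (j + i))
                  (fun i : Fin r => a (j + 1 + i))) / ρ ^ (n - r + 1)) *
            R (fun i : Fin r => a (n - r + 1 + i)))) :
    ∀ (n : ℕ), r ≤ n → ∀ b : ℕ → B,
      ((μr.map (fun (a : ℕ → A) (k : ℕ) => π (a k)))
          (cyl (fun i : Fin (n + 1) => b i))).toReal =
        dotProduct
          (fun v : Fin r → A => if ∀ i : Fin r, π (v i) = b (i : ℕ) then L v else 0)
          (Matrix.mulVec
            (((List.range (n - r + 1)).map (fun j =>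
              Matrix.of (fun v v' : Fin r → A =>
                if (∀ i : Fin r, π (v i) = b (j + (i : ℕ))) ∧
                    (∀ i : Fin r, π (v' i) = b (j + 1 + (i : ℕ))) then
                  transferMat hr ψr v v'
                else 0))).prod)
            (fun v : Fin r → A =>
              if ∀ i : Fin r, π (v i) = b (n - r + 1 + (i : ℕ)) then R v else 0)) /
          ρ ^ (n - r + 1) := by
  intro n hn b
  set m := n - r + 1
  have hN : m + r = n + 1 := by omega
  set W : (Fin (m + 1) → Fin r → A) → ℝ := fun f =>
    L (f 0) * (∏ j : Fin m, transferMat hr ψr (f j.castSucc) (f j.succ)) * R (f (Fin.last m))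
  have hW : ∀ f, 0 ≤ W f / ρ ^ m := fun f =>
    div_nonneg (mul_nonneg (mul_nonneg (hLpos _).le
      (Finset.prod_nonneg fun _ _ => transferMat_nonneg hr ψr _ _)) (hRpos _).le) (by positivity)
  have hcyl : ∀ c, μr (cyl c) = ENNReal.ofReal (W (windows hN c) / ρ ^ m) := by
    intro c
    obtain ⟨a, rfl⟩ : ∃ a : ℕ → A, (fun i : Fin (n + 1) => a i) = c :=
      ⟨fun k => c (Fin.ofNat _ k), by simp⟩
    rw [hParry n hn a, ← Fin.prod_univ_eq_prod_range]
    congr 1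
    simp only [W, windows_restrict, Fin.val_zero, zero_add, Fin.val_last, Fin.val_castSucc,
      Fin.val_succ]
    ring
  have hexp := dotProduct_listProd_restrict_mulVec (fun j v => ∀ i : Fin r, π (v i) = b (j + i))
    L R (fun _ => transferMat hr ψr) m
  simp only [zero_add] at hexp
  rw [hexp, sum_paths_eq_sum_windows hr hN _ fun f hf =>
      shiftCompatible_of_prod_transferMat_ne_zero hr ψr (by contrapose! hf; simp [hf]),
    map_cyl_eq_sum, Finset.sum_congr rfl fun c _ => hcyl c,
    ← ENNReal.ofReal_sum_of_nonneg fun c _ => hW _,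
    ENNReal.toReal_ofReal (Finset.sum_nonneg fun c _ => hW _), Finset.sum_div, Finset.sum_filter]
  refine Finset.sum_congr rfl fun c _ => ?_
  split_ifs with hc hwin hwin
  · rfl
  · exact absurd ((forall_windows_iff hr hN).2 hc) hwin
  · exact absurd ((forall_windows_iff hr hN).1 hwin) hc
  · simp

/-- matrix expression for the pushforward measure of a Markov measure:
`ν_r[b₀ⁿ] = L̄_{r,b₀^{r-1}}† (∏_j 𝓜_{r,b_j^{j+r}} / ρ^{n-r+1}) R̄_{r,b_{n-r+1}^n}`,
where the restrictions to the fibers `E_w = {v : πv = w}` are realized by zeroing out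
entries outside the fibers. -/
theorem pushforward_matrix_expression {A B : Type*} [Fintype A] [DecidableEq A]
    [MeasurableSpace A] [MeasurableSingletonClass A] [Fintype B] [MeasurableSpace B]
    [MeasurableSingletonClass B]
    (π : A → B) (hπ : Function.Surjective π)
    {r : ℕ} (hr : 1 ≤ r) (ψr : (ℕ → A) → ℝ) (hψr : IsLocConst r ψr)
    (ρ : ℝ) (hρ : 0 < ρ) (R L : (Fin r → A) → ℝ)
    (hRpos : ∀ v, 0 < R v) (hRsum : ∑ v, R v = 1) (hLpos : ∀ v, 0 < L v)
    (hReig : (transferMat hr ψr).mulVec R = ρ • R)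
    (hLeig : Matrix.vecMul L (transferMat hr ψr) = ρ • L)
    (hLR : dotProduct L R = 1)
    (μr : Measure (ℕ → A)) (hμp : IsProbabilityMeasure μr)
    (hParry : ∀ (n : ℕ), r ≤ n → ∀ a : ℕ → A,
      μr (cyl (fun i : Fin (n + 1) => a i)) =
        ENNReal.ofReal
          (L (fun i : Fin r => a i) *
            ((∏ j ∈ Finset.range (n - r + 1),
                transferMat hr ψr (fun i : Fin r => a (j + i))
                  (fun i : Fin r => a (j + 1 + i))) / ρ ^ (n - r + 1)) *
            R (fun i : Fin r => a (n - r + 1 + i)))) :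
    ∀ (n : ℕ), r ≤ n → ∀ b : ℕ → B,
      ((μr.map (fun (a : ℕ → A) (k : ℕ) => π (a k)))
          (cyl (fun i : Fin (n + 1) => b i))).toReal =
        dotProduct
          (fun v : Fin r → A => if ∀ i : Fin r, π (v i) = b (i : ℕ) then L v else 0)
          (Matrix.mulVec
            (((List.range (n - r + 1)).map (fun j =>
              Matrix.of (fun v v' : Fin r → A =>
                if (∀ i : Fin r, π (v i) = b (j + (i : ℕ))) ∧
                    (∀ i : Fin r, π (v' i) = b (j + 1 + (i : ℕ))) then
                  transferMat hr ψr v v'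
                else 0))).prod)
            (fun v : Fin r → A =>
              if ∀ i : Fin r, π (v i) = b (n - r + 1 + (i : ℕ)) then R v else 0)) /
          ρ ^ (n - r + 1) :=
  pushforward_matrix_expression_general π hr ψr ρ hρ R L hRpos hLpos μr hParry
end
end
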